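/- If A is a finite-dimensional simple algebra over ℝ, then A is isomorphic to a matrix algebra Mₙ(ℝ), Mₙ(ℂ), or Mₙ(ℍ) for some n ≥ 1. -/

import Mathlib

/-!
By Wedderburn–Artin, `A ≅ Mₙ(D)` for a finite-dimensional real division algebra `D`, so it
suffices to show `D ≅ ℝ, ℂ` or `ℍ` (Frobenius). Every commutative subalgebra of `D` is a finite
field extension of `ℝ`, hence embeds in `ℂ` and has dimension at most `2`. If `D ≠ ℝ` this gives
`i ∈ D` with `i² = -1`, whose centralizer is `ℝ[i] ≅ ℂ`. Splitting `z = (z - izi)/2 + (z + izi)/2`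
into a part commuting and a part anticommuting with `i` shows that either `D = ℝ[i]`, or an
anticommuting `w ≠ 0` exists; then `w²` is a negative real, a rescaling `j` of `w` satisfies
`j² = -1`, `ij = -ji`, and `z + izi = -((z + izi) j) j` lies in `ℝ[i] j`, so `D = ℍ`.
-/

open Module

theorem finrank_real_le_two (K : Type*) [Field K] [Algebra ℝ K] [FiniteDimensional ℝ K] :
    finrank ℝ K ≤ 2 :=
  Complex.finrank_real_complex ▸
    (IsAlgClosed.lift : K →ₐ[ℝ] ℂ).toLinearMap.finrank_le_finrank_of_injective (RingHom.injective _)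

theorem nonempty_algEquiv_complex_of_finrank_real_eq_two (K : Type*) [Field K] [Algebra ℝ K]
    (h : finrank ℝ K = 2) : Nonempty (K ≃ₐ[ℝ] ℂ) := by
  have : FiniteDimensional ℝ K := .of_finrank_pos (by omega)
  let f : K →ₐ[ℝ] ℂ := IsAlgClosed.lift
  have hf : Function.Injective f := RingHom.injective _
  exact ⟨.ofBijective f ⟨hf, (LinearMap.injective_iff_surjective_of_finrank_eq_finrank
    (h.trans Complex.finrank_real_complex.symm) (f := f.toLinearMap)).mp hf⟩⟩

theorem Subalgebra.two_le_finrank_of_ne_bot {F E : Type*} [Field F] [Ring E] [Nontrivial E]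
    [Algebra F E] {B : Subalgebra F E} [FiniteDimensional F B] (hB : B ≠ ⊥) :
    2 ≤ finrank F B := by
  have := Module.finrank_pos (R := F) (M := B)
  have := mt Subalgebra.finrank_eq_one_iff.mp hB
  omega

theorem AlgHom.nonempty_algEquiv_of_range_eq_top {R K A : Type*} [CommSemiring R] [DivisionRing K]
    [Semiring A] [Nontrivial A] [Algebra R K] [Algebra R A] (f : K →ₐ[R] A) (hf : f.range = ⊤) :
    Nonempty (A ≃ₐ[R] K) :=
  ⟨(AlgEquiv.ofBijective f ⟨RingHom.injective f.toRingHom, f.range_eq_top.mp hf⟩).symm⟩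

open IsMulCommutative in
noncomputable abbrev Subalgebra.fieldOfIsMulCommutative {F D : Type*} [Field F] [DivisionRing D]
    [Algebra F D] [FiniteDimensional F D] (B : Subalgebra F D) [IsMulCommutative B] : Field B :=
  ((Algebra.IsIntegral.isField_iff_isField (algebraMap F B).injective).mp
    (Field.toIsField F)).toField

section

variable {A : Type*} [Ring A] [Algebra ℝ A] {i : A}

theorem notMem_bot_of_mul_self_eq_neg_one [Nontrivial A] (hi : i * i = -1) :
    i ∉ (⊥ : Subalgebra ℝ A) := by
  rintro ⟨a, rfl⟩
  have : a * a = -1 := (algebraMap ℝ A).injective (by simpa using hi)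
  nlinarith

theorem lt_zero_of_mul_self_eq_algebraMap [NoZeroDivisors A] {x : A} {a : ℝ}
    (hx : x ∉ (⊥ : Subalgebra ℝ A)) (h : x * x = algebraMap ℝ A a) : a < 0 := by
  by_contra! ha
  set s := algebraMap ℝ A √a
  have hs : s * s = algebraMap ℝ A a := by rw [← map_mul, Real.mul_self_sqrt ha]
  have hfac : (x + s) * (x - s) = 0 := by
    rw [← (Algebra.commute_algebraMap_right √a x).mul_self_sub_mul_self_eq, h, hs, sub_self]
  rcases mul_eq_zero.mp hfac with h | h
  · exact hx ⟨-√a, by simp [s, eq_neg_of_add_eq_zero_left h]⟩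
  · exact hx ⟨√a, by simp [s, sub_eq_zero.mp h]⟩

end

section

variable {A : Type*} [Ring A] {i : A}

theorem mul_add_conj (hi : i * i = -1) (z : A) : i * (z + i * z * i) = i * z - z * i := by
  rw [mul_add, ← mul_assoc, ← mul_assoc, hi, neg_one_mul, neg_mul, sub_eq_add_neg]

theorem add_conj_mul (hi : i * i = -1) (z : A) : (z + i * z * i) * i = z * i - i * z := by
  rw [add_mul, mul_assoc, hi, mul_neg_one, sub_eq_add_neg]

theorem anticommute_add_conj (hi : i * i = -1) (z : A) :
    i * (z + i * z * i) = -((z + i * z * i) * i) := by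
  rw [mul_add_conj hi, add_conj_mul hi, neg_sub]

theorem commute_sub_conj (hi : i * i = -1) (z : A) : Commute i (z - i * z * i) := by
  have h1 : i * (z - i * z * i) = i * z + z * i := by
    rw [mul_sub, ← mul_assoc, ← mul_assoc, hi, neg_one_mul, neg_mul, sub_neg_eq_add]
  have h2 : (z - i * z * i) * i = i * z + z * i := by
    rw [sub_mul, mul_assoc _ i i, hi, mul_neg_one, sub_neg_eq_add, add_comm]
  exact h1.trans h2.symm

theorem commute_mul_of_anticommute {u j : A} (hu : i * u = -(u * i)) (hij : i * j = -(j * i)) :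
    Commute i (u * j) := by
  rw [Commute, SemiconjBy, ← mul_assoc, hu, neg_mul, mul_assoc, hij, mul_neg, neg_neg, mul_assoc]

end

section

variable {D : Type*} [DivisionRing D] [Algebra ℝ D]

theorem eq_zero_of_commute_of_anticommute {i w : D} (hi : i ≠ 0) (hc : Commute i w)
    (ha : i * w = -(w * i)) : w = 0 := by
  have := charZero_of_injective_algebraMap (algebraMap ℝ D).injective
  rw [hc.eq, self_eq_neg, mul_eq_zero] at ha
  exact ha.resolve_right hi

variable [FiniteDimensional ℝ D]

theorem Subalgebra.finrank_le_two_of_isMulCommutative (B : Subalgebra ℝ D) [IsMulCommutative B] :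
    finrank ℝ B ≤ 2 :=
  letI := B.fieldOfIsMulCommutative
  finrank_real_le_two B

theorem Subalgebra.exists_mul_self_eq_neg_one_of_isMulCommutative (B : Subalgebra ℝ D)
    [IsMulCommutative B] (hB : B ≠ ⊥) : ∃ i ∈ B, i * i = -1 := by
  let := B.fieldOfIsMulCommutative
  obtain ⟨e⟩ := nonempty_algEquiv_complex_of_finrank_real_eq_two B
    (B.finrank_le_two_of_isMulCommutative.antisymm (Subalgebra.two_le_finrank_of_ne_bot hB))
  refine ⟨e.symm Complex.I, (e.symm Complex.I).2, ?_⟩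
  have h : e.symm Complex.I * e.symm Complex.I = -1 := by
    rw [← map_mul, Complex.I_mul_I, map_neg, map_one]
  exact congrArg Subtype.val h

theorem mem_adjoin_singleton_of_commute {x z : D} (hx : x ∉ (⊥ : Subalgebra ℝ D))
    (hz : Commute x z) : z ∈ Algebra.adjoin ℝ {x} := by
  have : IsMulCommutative (Algebra.adjoin ℝ {x, z}) := Algebra.isMulCommutative_adjoin ℝ (by
    rintro a (rfl | rfl) b (rfl | rfl) <;> first | rfl | exact hz | exact hz.symm)
  have hle : Algebra.adjoin ℝ {x} ≤ Algebra.adjoin ℝ {x, z} :=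
    Algebra.adjoin_mono (Set.singleton_subset_iff.mpr (Set.mem_insert x _))
  have hne : Algebra.adjoin ℝ {x} ≠ ⊥ := fun h => hx (Algebra.adjoin_le_iff.mp h.le rfl)
  rw [Subalgebra.eq_of_le_of_finrank_le hle ((Subalgebra.finrank_le_two_of_isMulCommutative _).trans
    (Subalgebra.two_le_finrank_of_ne_bot hne))]
  exact Algebra.subset_adjoin (Set.mem_insert_of_mem x rfl)

theorem exists_lt_zero_mul_self_eq_algebraMap_of_anticommute {i w : D} (hi : i * i = -1)
    (hw : i * w = -(w * i)) (hw0 : w ≠ 0) : ∃ a < 0, w * w = algebraMap ℝ D a := by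
  have hi0 : i ≠ 0 := by rintro rfl; simp at hi
  obtain ⟨c, hc⟩ : w * w ∈ (Complex.liftAux i hi).range := Complex.range_liftAux i hi ▸
    mem_adjoin_singleton_of_commute (notMem_bot_of_mul_self_eq_neg_one hi)
      (commute_mul_of_anticommute hw hw)
  change Complex.liftAux i hi c = w * w at hc
  rw [Complex.liftAux_apply] at hc
  have him : c.im = 0 := by
    by_contra h
    have hi' : i = c.im⁻¹ • (w * w - algebraMap ℝ D c.re) := by
      rw [← hc, add_sub_cancel_left, smul_smul, inv_mul_cancel₀ h, one_smul]
    have hiw : Commute i w := by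
      rw [hi']
      exact (((Commute.refl w).mul_left (Commute.refl w)).sub_left
        (Algebra.commute_algebraMap_left c.re w)).smul_left _
    exact hw0 (eq_zero_of_commute_of_anticommute hi0 hiw hw)
  have hwbot : w ∉ (⊥ : Subalgebra ℝ D) := by
    rintro ⟨a, rfl⟩
    exact hw0 (eq_zero_of_commute_of_anticommute hi0 (Algebra.commute_algebraMap_right a i) hw)
  rw [him, zero_smul, add_zero] at hc
  exact ⟨c.re, lt_zero_of_mul_self_eq_algebraMap hwbot hc.symm, hc.symm⟩

theorem exists_mul_self_eq_neg_one_and_anticommute {i z : D} (hi : i * i = -1) (hz : ¬Commute i z) :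
    ∃ j : D, j * j = -1 ∧ i * j = -(j * i) := by
  have hw0 : z + i * z * i ≠ 0 := fun h =>
    hz (sub_eq_zero.mp (by rw [← mul_add_conj hi, h, mul_zero]))
  obtain ⟨a, ha, hwa⟩ := exists_lt_zero_mul_self_eq_algebraMap_of_anticommute hi
    (anticommute_add_conj hi z) hw0
  have hs : √(-a) * √(-a) = -a := Real.mul_self_sqrt (by linarith)
  refine ⟨(√(-a))⁻¹ • (z + i * z * i), ?_, ?_⟩
  · rw [smul_mul_smul_comm, hwa, Algebra.smul_def, ← map_mul, ← mul_inv, hs,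
      show (-a)⁻¹ * a = -1 by rw [← neg_inv, neg_mul, inv_mul_cancel₀ ha.ne], map_neg, map_one]
  · rw [mul_smul_comm, smul_mul_assoc, anticommute_add_conj hi z, smul_neg]

theorem adjoin_pair_eq_top_of_anticommute {i j : D} (hi : i * i = -1) (hj : j * j = -1)
    (hij : i * j = -(j * i)) : Algebra.adjoin ℝ {i, j} = ⊤ := by
  set S := Algebra.adjoin ℝ {i, j}
  have hiS : i ∈ S := Algebra.subset_adjoin (Set.mem_insert i _)
  have hjS : j ∈ S := Algebra.subset_adjoin (Set.mem_insert_of_mem i rfl)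
  have hcent : ∀ y, Commute i y → y ∈ S := fun y hy =>
    Algebra.adjoin_le (Set.singleton_subset_iff.mpr hiS)
      (mem_adjoin_singleton_of_commute (notMem_bot_of_mul_self_eq_neg_one hi) hy)
  refine eq_top_iff.mpr fun z _ => ?_
  set u := z + i * z * i
  have hu : u = -(u * j) * j := by rw [neg_mul, mul_assoc, hj, mul_neg_one, neg_neg]
  have hz : z = (2 : ℝ)⁻¹ • (z - i * z * i) + (2 : ℝ)⁻¹ • u := by module
  rw [hz, hu]
  have huj : u * j ∈ S := hcent _ (commute_mul_of_anticommute (anticommute_add_conj hi z) hij)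
  exact add_mem (S.smul_mem (hcent _ (commute_sub_conj hi z)) _)
    (S.smul_mem (mul_mem (neg_mem huj) hjS) _)

variable (D) in
theorem DivisionRing.nonempty_algEquiv_real_or_complex_or_quaternion :
    Nonempty (D ≃ₐ[ℝ] ℝ) ∨ Nonempty (D ≃ₐ[ℝ] ℂ) ∨ Nonempty (D ≃ₐ[ℝ] Quaternion ℝ) := by
  rcases eq_or_ne (⊥ : Subalgebra ℝ D) ⊤ with hbot | hbot
  · exact .inl ⟨Subalgebra.topEquiv.symm.trans
      ((Subalgebra.equivOfEq _ _ hbot.symm).trans (Algebra.botEquiv ℝ D))⟩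
  obtain ⟨x, -, hx⟩ := SetLike.exists_of_lt hbot.lt_top
  obtain ⟨i, -, hi⟩ := (Algebra.adjoin ℝ {x}).exists_mul_self_eq_neg_one_of_isMulCommutative
    fun h => hx (Algebra.adjoin_le_iff.mp h.le rfl)
  by_cases hc : ∀ z, Commute i z
  · refine .inr (.inl ((Complex.liftAux i hi).nonempty_algEquiv_of_range_eq_top ?_))
    rw [Complex.range_liftAux, eq_top_iff]
    exact fun z _ => mem_adjoin_singleton_of_commute (notMem_bot_of_mul_self_eq_neg_one hi) (hc z)
  obtain ⟨z, hz⟩ := not_forall.mp hc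
  obtain ⟨j, hj, hij⟩ := exists_mul_self_eq_neg_one_and_anticommute hi hz
  let q : QuaternionAlgebra.Basis D (-1 : ℝ) 0 (-1) :=
    { i, j, k := i * j
      i_mul_i := by rw [hi]; simp
      j_mul_j := by rw [hj]; simp
      i_mul_j := rfl
      j_mul_i := by rw [hij]; simp }
  let f : Quaternion ℝ →ₐ[ℝ] D := q.liftHom
  have hf : f.range = Algebra.adjoin ℝ {i, j, i * j} := q.range_liftHom
  refine .inr (.inr (f.nonempty_algEquiv_of_range_eq_top ?_))
  rw [hf, eq_top_iff, ← adjoin_pair_eq_top_of_anticommute hi hj hij]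
  exact Algebra.adjoin_mono
    (Set.insert_subset_insert (Set.singleton_subset_iff.mpr (Set.mem_insert j _)))

end

/-- Every finite-dimensional simple `ℝ`-algebra is isomorphic to a matrix algebra
`Mₙ(ℝ)`, `Mₙ(ℂ)`, or `Mₙ(ℍ)` for some `n ≥ 1` (Wedderburn + Frobenius). -/
theorem simple_real_algebra_iso_matrix (A : Type) [Ring A] [Algebra ℝ A]
    [FiniteDimensional ℝ A] [IsSimpleRing A] :
    ∃ n : ℕ, 1 ≤ n ∧
      (Nonempty (A ≃ₐ[ℝ] Matrix (Fin n) (Fin n) ℝ) ∨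
       Nonempty (A ≃ₐ[ℝ] Matrix (Fin n) (Fin n) ℂ) ∨
       Nonempty (A ≃ₐ[ℝ] Matrix (Fin n) (Fin n) (Quaternion ℝ))) := by
  have : IsArtinianRing A := .of_finite ℝ A
  obtain ⟨n, hn, D, _, _, _, ⟨e⟩⟩ := IsSimpleRing.exists_algEquiv_matrix_divisionRing_finite ℝ A
  have hD := DivisionRing.nonempty_algEquiv_real_or_complex_or_quaternion D
  exact ⟨n, Nat.one_le_iff_ne_zero.mpr hn.out,
    hD.imp (.map (e.trans ·.mapMatrix)) (.imp (.map (e.trans ·.mapMatrix)) (.map (e.trans ·.mapMatrix)))⟩
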